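/- (Tensor model for cyclic monotone independence.) Let C be a unital ℂ-algebra, let B ⊆ C be a unital subalgebra, let ω, τ : C → ℂ be linear maps, let a₁, …, a_p ∈ C, and let b₀, b₁, …, b_q ∈ B with b₀ = 1. Assume: (i) τ(1) = 1, τ(b_i) = 0 for 1 ≤ i ≤ q, and τ(b_i b_j) = δ_{ij} for 1 ≤ i, j ≤ q; (ii) the pair is cyclically monotone: for every m ≥ 1, j₁, …, j_m ∈ {1,…,p}, and c₀, c₁, …, c_m ∈ B, one has ω(c₀ a_{j₁} c₁ a_{j₂} c₂ ⋯ a_{j_m} c_m) = ω(a_{j₁} ⋯ a_{j_m}) τ(c₁) ⋯ τ(c_{m−1}) τ(c_m c₀); (iii) there are matrices A₁, …, A_p ∈ M_n(ℂ) with ω(a_{j₁} ⋯ a_{j_m}) = Tr(A_{j₁} ⋯ A_{j_m}) for all m ≥ 1 and j₁,…,j_m ∈ {1,…,p}. Given coefficients λ_{i₁,i₂,j} ∈ ℂ (0 ≤ i₁, i₂ ≤ q, 1 ≤ j ≤ p), set P = Σ_{i₁,i₂,j} λ_{i₁,i₂,j} b_{i₁} a_j b_{i₂} ∈ C and P̃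 = Σ_{i₁,i₂,j} λ_{i₁,i₂,j} (I_n ⊗ B_{i₁}) (A_j ⊗ E) (I_n ⊗ B_{i₂}) ∈ M_n(ℂ) ⊗ M_{2^q}(ℂ). Then for every k ≥ 1, ω(P^k) = Tr(P̃^k), where Tr is the non-normalized trace on M_n(ℂ) ⊗ M_{2^q}(ℂ). -/

import Mathlib

/-!
Expand `P^k` into words. The ω-value of a word `b_{i₁} a_{j₁} b_{i₁'} ⋯ b_{i_k} a_{j_k} b_{i_k'}`,
regrouped as `c₀ a_{j₁} c₁ ⋯ a_{j_k} c_k` with `c_r = b_{i_r'} b_{i_{r+1}}`, is by cyclic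
monotonicity `Tr(A_{j₁} ⋯ A_{j_k})` times the cyclic product of the `τ(b_{i_r'} b_{i_{r+1}}) =
δ(i_r', i_{r+1})`. The corresponding word of `P̃` is `(A_{j₁} ⋯ A_{j_k}) ⊗ ∏_r B_{i_r} E B_{i_r'}`;
as `E` is the rank-one projection onto `e₀` and `(B_i B_j)₀₀ = δ(i, j)`, the second factor
collapses to the same product of deltas times `B_{i₁} E B_{i_k'}`, whose trace closes the cycle.
-/

open Matrix BigOperators

/-- The 2×2 flip matrix `J = [[0,1],[1,0]]`. -/
noncomputable def J2 : Matrix (Fin 2) (Fin 2) ℂ := !![0, 1; 1, 0]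

/-- The 2×2 matrix unit `E₁₁ = [[1,0],[0,0]]`. -/
noncomputable def E11 : Matrix (Fin 2) (Fin 2) ℂ := !![1, 0; 0, 0]

/-- `Bq q i` for `i = 1,…,q` is the Kronecker product with `J` in the `i`-th tensor factor and
the identity elsewhere; `Bq q 0` is the identity of `M_{2^q}(ℂ)`.  Here `M_{2^q}(ℂ)` is realized
as matrices indexed by `Fin q → Fin 2`, and the Kronecker product entrywise is the product of the
entries of the factors. -/
noncomputable def Bq (q : ℕ) (i : Fin (q + 1)) :
    Matrix (Fin q → Fin 2) (Fin q → Fin 2) ℂ :=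
  Matrix.of fun s t => ∏ j : Fin q,
    (if ((j : ℕ) + 1 = (i : ℕ)) then J2 else (1 : Matrix (Fin 2) (Fin 2) ℂ)) (s j) (t j)

/-- `Etens q = E₁₁^{⊗q}`. -/
noncomputable def Etens (q : ℕ) : Matrix (Fin q → Fin 2) (Fin q → Fin 2) ℂ :=
  Matrix.of fun s t => ∏ j : Fin q, E11 (s j) (t j)

open Kronecker

section NoncommProducts

variable {ι R M : Type*}

theorem sum_pow_eq_sum_prod_ofFn [Fintype ι] [Semiring R] (f : ι → R) (k : ℕ) :
    (∑ i, f i) ^ k = ∑ w : Fin k → ι, (List.ofFn fun r => f (w r)).prod := by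
  induction k with
  | zero => simp
  | succ k ih =>
    rw [pow_succ', ih, Finset.sum_mul_sum, ← Fintype.sum_prod_type']
    exact Fintype.sum_equiv (Fin.consEquiv fun _ => ι) _ _ fun _ => by simp [Fin.consEquiv]

theorem List.prod_ofFn_smul [CommSemiring R] [Semiring M] [Algebra R M] {k : ℕ}
    (c : Fin k → R) (x : Fin k → M) :
    (List.ofFn fun r => c r • x r).prod = (∏ r, c r) • (List.ofFn x).prod := by
  induction k with
  | zero => simp
  | succ k ih => simp [List.ofFn_succ, ih, Fin.prod_univ_succ, smul_smul, mul_comm]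

theorem List.prod_ofFn_mul_mul_mul_eq_mul_prod_ofFn [Monoid M] (u x v : ℕ → M) (k : ℕ) :
    (List.ofFn fun r : Fin k => u r * x r * v r).prod * u k
      = u 0 * (List.ofFn fun r : Fin k => x r * (v r * u (r + 1))).prod := by
  induction k with
  | zero => simp
  | succ k ih =>
    simp only [List.ofFn_succ', List.concat_eq_append, List.prod_append, List.prod_singleton,
      Fin.val_castSucc, Fin.val_last]
    rw [← mul_assoc (u 0), ← ih]
    simp only [mul_assoc]

theorem List.prod_ofFn_mul_mul_eq_smul [CommSemiring R] [Semiring M] [Algebra R M]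
    {e : M} {φ : M → R} (he : ∀ y, e * y * e = φ y • e) (u v : ℕ → M) {k : ℕ} (hk : 1 ≤ k) :
    (List.ofFn fun r : Fin k => u r * e * v r).prod
      = (∏ r ∈ Finset.Icc 1 (k - 1), φ (v (r - 1) * u r)) • (u 0 * e * v (k - 1)) := by
  induction k, hk using Nat.le_induction with
  | base => simp
  | succ k hk ih =>
    obtain ⟨m, rfl⟩ := Nat.exists_eq_add_of_le' hk
    rw [Nat.add_sub_cancel] at ih
    have hsandwich : u 0 * e * v m * (u (m + 1) * e * v (m + 1))
        = φ (v m * u (m + 1)) • (u 0 * e * v (m + 1)) :=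
      calc _ = u 0 * (e * (v m * u (m + 1)) * e) * v (m + 1) := by simp only [mul_assoc]
        _ = _ := by rw [he, mul_smul_comm, smul_mul_assoc]
    rw [List.ofFn_succ', List.concat_eq_append, List.prod_append]
    simp only [Fin.val_castSucc, ih, List.prod_singleton, Fin.val_last, smul_mul_assoc,
      hsandwich, smul_smul, Nat.add_sub_cancel, Finset.prod_Icc_succ_top (by omega : 1 ≤ m + 1)]

theorem Matrix.prod_ofFn_kronecker [CommSemiring R] {m n : Type*} [Fintype m] [DecidableEq m]
    [Fintype n] [DecidableEq n] {k : ℕ} (X : Fin k → Matrix m m R) (Y : Fin k → Matrix n n R) :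
    (List.ofFn fun r => X r ⊗ₖ Y r).prod = (List.ofFn X).prod ⊗ₖ (List.ofFn Y).prod := by
  induction k with
  | zero => simp
  | succ k ih => simp [List.ofFn_succ, ih, mul_kronecker_mul]

end NoncommProducts

namespace Matrix

variable {ι α R : Type*} [CommSemiring R] [Fintype ι]

def piKronecker (X : ι → Matrix α α R) : Matrix (ι → α) (ι → α) R :=
  of fun s t => ∏ m, X m (s m) (t m)

theorem piKronecker_mul [DecidableEq ι] [Fintype α] (X Y : ι → Matrix α α R) :
    piKronecker X * piKronecker Y = piKronecker (X * Y) := by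
  ext s t
  simp only [piKronecker, mul_apply, of_apply, Pi.mul_apply, ← Finset.prod_mul_distrib]
  exact (Fintype.prod_sum fun m x => X m (s m) x * Y m x (t m)).symm

theorem piKronecker_single_one [DecidableEq α] (i j : ι → α) :
    piKronecker (fun m => single (i m) (j m) (1 : R)) = single i j 1 := by
  ext s t
  simp [piKronecker, single, Fintype.prod_boole, funext_iff, forall_and]

theorem trace_prod_ofFn_mul_single_mul [Fintype α] [DecidableEq α] (i : α)
    (u v : ℕ → Matrix α α R) {k : ℕ} (hk : 1 ≤ k) :
    trace (List.ofFn fun r : Fin k => u r * single i i 1 * v r).prod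
      = (∏ r ∈ Finset.Icc 1 (k - 1), (v (r - 1) * u r) i i) * (v (k - 1) * u 0) i i := by
  have hsingle : ∀ y : Matrix α α R, single i i 1 * y * single i i 1 = y i i • single i i 1 := by
    intro y
    rw [single_mul_mul_single, smul_single, one_mul, mul_one, smul_eq_mul, mul_one]
  rw [List.prod_ofFn_mul_mul_eq_smul hsingle u v hk, trace_smul,
    mul_assoc, trace_mul_comm, mul_assoc, trace_single_mul, one_smul, smul_eq_mul]

end Matrix

theorem E11_eq_single : E11 = single 0 0 1 := by
  ext i j; fin_cases i <;> fin_cases j <;> rfl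

theorem Etens_eq_single (q : ℕ) : Etens q = single 0 0 1 := by
  rw [Etens, E11_eq_single, ← piKronecker_single_one]
  rfl

theorem Bq_mul_Bq_apply_zero (q : ℕ) (i j : Fin (q + 1)) :
    (Bq q i * Bq q j) 0 0 = if i = j then 1 else 0 := by
  have hfactor : ∀ m : Fin q,
      ((if (m : ℕ) + 1 = i then J2 else 1) * (if (m : ℕ) + 1 = j then J2 else 1)) 0 0
        = if ((m : ℕ) + 1 = i ↔ (m : ℕ) + 1 = j) then (1 : ℂ) else 0 := by
    intro m
    split_ifs <;> simp_all [J2]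
  have hindex : (∀ m : Fin q, ((m : ℕ) + 1 = i ↔ (m : ℕ) + 1 = j)) ↔ i = j := by
    refine ⟨fun h => ?_, fun h _ => h ▸ Iff.rfl⟩
    refine Fin.ext (by_contra fun hij => ?_)
    have := h ⟨max (i : ℕ) j - 1, by omega⟩
    simp only at this
    omega
  change (piKronecker (fun m : Fin q => if (m : ℕ) + 1 = i then J2 else 1)
    * piKronecker (fun m : Fin q => if (m : ℕ) + 1 = j then J2 else 1)) 0 0 = _
  rw [piKronecker_mul]
  simp only [piKronecker, of_apply, Pi.mul_apply, Pi.zero_apply, hfactor, Fintype.prod_boole,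
    hindex]

section CyclicMonotone

variable {R C : Type*} [CommSemiring R] [Semiring C] [Algebra R C] {p : ℕ}

def IsCyclicallyMonotone (B : Subalgebra R C) (ω τ : C →ₗ[R] R) (a : Fin p → C) : Prop :=
  ∀ m : ℕ, 1 ≤ m → ∀ (j : ℕ → Fin p) (c : ℕ → C), (∀ r, c r ∈ B) →
    ω (c 0 * (List.ofFn fun r : Fin m => a (j ((r : ℕ) + 1)) * c ((r : ℕ) + 1)).prod)
      = ω ((List.ofFn fun r : Fin m => a (j ((r : ℕ) + 1))).prod)
        * (∏ r ∈ Finset.Icc 1 (m - 1), τ (c r)) * τ (c m * c 0)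

theorem IsCyclicallyMonotone.apply_prod_ofFn_mul_mul {B : Subalgebra R C} {ω τ : C →ₗ[R] R}
    {a : Fin p → C} (h : IsCyclicallyMonotone B ω τ a) {u v : ℕ → C} (hu : ∀ r, u r ∈ B)
    (hv : ∀ r, v r ∈ B) (j : ℕ → Fin p) {k : ℕ} (hk : 1 ≤ k) :
    ω (List.ofFn fun r : Fin k => u r * a (j r) * v r).prod
      = ω (List.ofFn fun r : Fin k => a (j r)).prod
        * (∏ r ∈ Finset.Icc 1 (k - 1), τ (v (r - 1) * u r)) * τ (v (k - 1) * u 0) := by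
  -- `U` is `u` below `k` and `1` at `k`, so that regrouping the word ends with `c k = v (k - 1)`.
  set U : ℕ → C := fun s => if s < k then u s else 1
  set c : ℕ → C := fun s => if s = 0 then u 0 else v (s - 1) * U s
  have hc_mem : ∀ r, c r ∈ B := by
    intro r
    simp only [c, U]
    split_ifs <;> simp [hu, hv, mul_mem]
  have hregroup : (List.ofFn fun r : Fin k => u r * a (j r) * v r).prod
      = c 0 * (List.ofFn fun r : Fin k => a (j r) * c (r + 1)).prod :=
    calc _ = (List.ofFn fun r : Fin k => U r * a (j r) * v r).prod * U k := by simp [U]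
      _ = U 0 * (List.ofFn fun r : Fin k => a (j r) * (v r * U (r + 1))).prod :=
        List.prod_ofFn_mul_mul_mul_eq_mul_prod_ofFn U (fun s => a (j s)) v k
      _ = _ := by simp [c, U, show k ≠ 0 by omega]
  have hτc : ∀ r ∈ Finset.Icc 1 (k - 1), τ (c r) = τ (v (r - 1) * u r) := by
    intro r hr
    rw [Finset.mem_Icc] at hr
    simp [c, U, show r ≠ 0 by omega, show r < k by omega]
  have hck : c k * c 0 = v (k - 1) * u 0 := by simp [c, U, show k ≠ 0 by omega]
  have hcyc := h k hk (fun s => j (s - 1)) c hc_mem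
  simp only [Nat.add_sub_cancel] at hcyc
  rw [hregroup, hcyc, Finset.prod_congr rfl hτc, hck]

end CyclicMonotone

theorem LinearMap.apply_mul_eq_ite_of_orthonormal {R C : Type*} [CommSemiring R] [Semiring C]
    [Algebra R C] (τ : C →ₗ[R] R) {q : ℕ} {b : Fin (q + 1) → C} (hb0 : b 0 = 1)
    (hτ1 : τ 1 = 1) (hτb : ∀ i : Fin (q + 1), i ≠ 0 → τ (b i) = 0)
    (hτbb : ∀ i j : Fin (q + 1), i ≠ 0 → j ≠ 0 → τ (b i * b j) = if i = j then 1 else 0)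
    (i j : Fin (q + 1)) : τ (b i * b j) = if i = j then 1 else 0 := by
  by_cases hi : i = 0 <;> by_cases hj : j = 0
  · simp [hi, hj, hb0, hτ1]
  · simp [hi, hb0, hτb j hj, Ne.symm hj]
  · simp [hj, hb0, hτb i hi, hi]
  · exact hτbb i j hi hj

theorem apply_prod_ofFn_eq_trace_tensor_model {C : Type*} [Ring C] [Algebra ℂ C]
    {Bsub : Subalgebra ℂ C} {ω τ : C →ₗ[ℂ] ℂ} {p q n : ℕ} {a : Fin p → C}
    {b : Fin (q + 1) → C} {A : Fin p → Matrix (Fin n) (Fin n) ℂ}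
    (hcyc : IsCyclicallyMonotone Bsub ω τ a) (hbB : ∀ i, b i ∈ Bsub)
    (hτ : ∀ i j, τ (b i * b j) = if i = j then 1 else 0)
    (hA : ∀ m : ℕ, 1 ≤ m → ∀ j : ℕ → Fin p,
      ω ((List.ofFn fun r : Fin m => a (j ((r : ℕ) + 1))).prod)
        = trace ((List.ofFn fun r : Fin m => A (j ((r : ℕ) + 1))).prod))
    (i₁ i₂ : ℕ → Fin (q + 1)) (j : ℕ → Fin p) {k : ℕ} (hk : 1 ≤ k) :
    ω (List.ofFn fun r : Fin k => b (i₁ r) * a (j r) * b (i₂ r)).prod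
      = trace (List.ofFn fun r : Fin k => ((1 : Matrix (Fin n) (Fin n) ℂ) ⊗ₖ Bq q (i₁ r))
          * (A (j r) ⊗ₖ Etens q) * ((1 : Matrix (Fin n) (Fin n) ℂ) ⊗ₖ Bq q (i₂ r))).prod := by
  have hfactor : ∀ (X : Matrix (Fin n) (Fin n) ℂ)
      (Y Y₁ Y₂ : Matrix (Fin q → Fin 2) (Fin q → Fin 2) ℂ),
      ((1 : Matrix (Fin n) (Fin n) ℂ) ⊗ₖ Y₁) * (X ⊗ₖ Y) * ((1 : Matrix (Fin n) (Fin n) ℂ) ⊗ₖ Y₂)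
        = X ⊗ₖ (Y₁ * Y * Y₂) := by
    intro X Y Y₁ Y₂
    rw [← mul_kronecker_mul, ← mul_kronecker_mul, one_mul, mul_one]
  have hA' := hA k hk (fun s => j (s - 1))
  simp only [Nat.add_sub_cancel] at hA'
  simp only [hfactor]
  rw [prod_ofFn_kronecker, trace_kronecker, Etens_eq_single,
    trace_prod_ofFn_mul_single_mul 0 (fun s => Bq q (i₁ s)) (fun s => Bq q (i₂ s)) hk,
    hcyc.apply_prod_ofFn_mul_mul (fun _ => hbB _) (fun _ => hbB _) j hk, hA']
  simp only [Bq_mul_Bq_apply_zero, hτ, mul_assoc]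

/-- Tensor model for cyclic monotone independence: if the pair formed by the `a_j` and the
unital subalgebra `B` (containing the `b_i`) is cyclically monotone with respect to `(τ, ω)`,
the `b_i` (for `i ≥ 1`) are τ-centred and τ-orthonormal, and the `a_j` have the same
joint distribution under `ω` as matrices `A_j` under the non-normalized trace, then for
`P = Σ λ_{i₁,i₂,j} b_{i₁} a_j b_{i₂}` and
`P̃ = Σ λ_{i₁,i₂,j} (I_n ⊗ B_{i₁})(A_j ⊗ E)(I_n ⊗ B_{i₂})` one has
`ω(P^k) = Tr(P̃^k)` for all `k ≥ 1`. -/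
theorem tensor_model_cyclic_monotone {C : Type*} [Ring C] [Algebra ℂ C]
    (Bsub : Subalgebra ℂ C) (ω τ : C →ₗ[ℂ] ℂ)
    (p q n : ℕ) (a : Fin p → C) (b : Fin (q + 1) → C)
    (hb0 : b 0 = 1) (hbB : ∀ i, b i ∈ Bsub)
    (hτ1 : τ 1 = 1)
    (hτb : ∀ i : Fin (q + 1), i ≠ 0 → τ (b i) = 0)
    (hτbb : ∀ i j : Fin (q + 1), i ≠ 0 → j ≠ 0 →
      τ (b i * b j) = if i = j then 1 else 0)
    (hcyc : ∀ m : ℕ, 1 ≤ m → ∀ (j : ℕ → Fin p) (c : ℕ → C), (∀ r, c r ∈ Bsub) →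
      ω (c 0 * (List.ofFn fun r : Fin m => a (j ((r : ℕ) + 1)) * c ((r : ℕ) + 1)).prod)
        = ω ((List.ofFn fun r : Fin m => a (j ((r : ℕ) + 1))).prod)
          * (∏ r ∈ Finset.Icc 1 (m - 1), τ (c r)) * τ (c m * c 0))
    (A : Fin p → Matrix (Fin n) (Fin n) ℂ)
    (hA : ∀ m : ℕ, 1 ≤ m → ∀ j : ℕ → Fin p,
      ω ((List.ofFn fun r : Fin m => a (j ((r : ℕ) + 1))).prod)
        = Matrix.trace ((List.ofFn fun r : Fin m => A (j ((r : ℕ) + 1))).prod))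
    (lam : Fin (q + 1) → Fin (q + 1) → Fin p → ℂ)
    (k : ℕ) (hk : 1 ≤ k) :
    ω ((∑ i₁ : Fin (q + 1), ∑ i₂ : Fin (q + 1), ∑ j : Fin p,
          lam i₁ i₂ j • (b i₁ * a j * b i₂)) ^ k)
      = Matrix.trace ((∑ i₁ : Fin (q + 1), ∑ i₂ : Fin (q + 1), ∑ j : Fin p,
          lam i₁ i₂ j •
            (Matrix.kroneckerMap (· * ·) (1 : Matrix (Fin n) (Fin n) ℂ) (Bq q i₁)
              * Matrix.kroneckerMap (· * ·) (A j) (Etens q)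
              * Matrix.kroneckerMap (· * ·) (1 : Matrix (Fin n) (Fin n) ℂ) (Bq q i₂))) ^ k) := by
  have : NeZero k := ⟨by omega⟩
  simp only [← Fintype.sum_prod_type']
  rw [sum_pow_eq_sum_prod_ofFn, sum_pow_eq_sum_prod_ofFn, map_sum, trace_sum]
  refine Finset.sum_congr rfl fun w _ => ?_
  rw [List.prod_ofFn_smul, List.prod_ofFn_smul, map_smul, trace_smul]
  congr 1
  simpa only [Fin.ofNat_eq_cast, Fin.cast_val_eq_self] using
    apply_prod_ofFn_eq_trace_tensor_model hcyc hbB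
      (τ.apply_mul_eq_ite_of_orthonormal hb0 hτ1 hτb hτbb) hA
      (fun s => (w (Fin.ofNat k s)).1) (fun s => (w (Fin.ofNat k s)).2.1)
      (fun s => (w (Fin.ofNat k s)).2.2) hk
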